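/- arXiv:1901.02201 — 2 statements merged into one kernel-verified Lean document; each statement's English description precedes it below -/
import Mathlib

section
/- For any finite tree G in which every vertex has degree at most 3, the number of Laplacian eigenvalues of G that are at least 4 (counted with multiplicity) is at most the number of vertices of G with degree exactly 3. -/
/-!
For every `x`, `xᵀ L x = 2 ∑ᵥ deg(v) xᵥ² - ∑_{uv ∈ E} (x_u + x_v)²`. If `x` vanishes at the
vertices of degree 3, hence is supported where the degree is at most 2, this is `≤ 4 ‖x‖²`, with
equality only if `x_u = -x_v` along every edge and the degree is 2 on the support of `x`; in a tree,
which is connected and has a vertex of degree other than 2, that means `x = 0`. On the span of the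
eigenvectors with eigenvalue `≥ 4`, on the other hand, `xᵀ L x ≥ 4 ‖x‖²`. So restriction to the
T-junctions is injective on that span, whose dimension is `n4plus G`.
-/
open scoped Classical in
/-- Number of Laplacian eigenvalues (with multiplicity) that are `≥ 4`. -/
noncomputable def n4plus {V : Type*} [Fintype V] [DecidableEq V] (G : SimpleGraph V) : ℕ :=
  (Finset.univ.filter
    fun i => (4:ℝ) ≤ (SimpleGraph.posSemidef_lapMatrix ℝ G).1.eigenvalues i).card

open scoped Classical in
/-- The `j`-th largest Laplacian eigenvalue (1-indexed). -/
noncomputable def eigDesc {V : Type*} [Fintype V] [DecidableEq V] (G : SimpleGraph V) (j : ℕ) : ℝ :=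
  ((Finset.univ.val.map (SimpleGraph.posSemidef_lapMatrix ℝ G).1.eigenvalues).sort (· ≤ ·)).getD
    (Fintype.card V - j) 0

open Finset Matrix

namespace SimpleGraph

theorem Reachable.abs_eq_of_forall_adj_eq_neg {V : Type*} {G : SimpleGraph V} {x : V → ℝ}
    (hx : ∀ i j, G.Adj i j → x j = -x i) {u v : V} (h : G.Reachable u v) : |x u| = |x v| := by
  obtain ⟨w⟩ := h
  induction w with
  | nil => rfl
  | cons hadj _ ih => rw [← ih, hx _ _ hadj, abs_neg]

variable {V : Type*} [Fintype V] {G : SimpleGraph V} [DecidableRel G.Adj]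

theorem IsTree.exists_degree_ne_two (hT : G.IsTree) : ∃ v, G.degree v ≠ 2 := by
  by_contra! h
  have hsum := G.sum_degrees_eq_twice_card_edges
  have hcard := hT.card_edgeFinset
  have hpos := @Fintype.card_pos V _ hT.connected.nonempty
  simp only [h, sum_const, card_univ, smul_eq_mul] at hsum
  omega

variable [DecidableEq V]

theorem dotProduct_lapMatrix_mulVec_add_sum_adj_sq_add (x : V → ℝ) :
    x ⬝ᵥ (G.lapMatrix ℝ *ᵥ x) + (∑ i, ∑ j, if G.Adj i j then (x i + x j) ^ 2 else 0) / 2 =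
      2 * ∑ i, G.degree i * x i ^ 2 := by
  have hsymm : (∑ i, ∑ j, if G.Adj i j then x j ^ 2 else 0) =
      ∑ i, ∑ j, if G.Adj i j then x i ^ 2 else 0 := by
    rw [sum_comm]
    simp_rw [G.adj_comm]
  have hdeg : ∑ i, G.degree i * x i ^ 2 = ∑ i, ∑ j, if G.Adj i j then x i ^ 2 else 0 := by
    simp_rw [G.degree_eq_sum_if_adj (R := ℝ), sum_mul, ite_mul, one_mul, zero_mul]
  have hpt : ∀ i j, ((if G.Adj i j then (x i - x j) ^ 2 else 0) +
      if G.Adj i j then (x i + x j) ^ 2 else 0) =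
        2 * ((if G.Adj i j then x i ^ 2 else 0) + if G.Adj i j then x j ^ 2 else 0) := by
    intro i j
    split_ifs <;> ring
  rw [← toLinearMap₂'_apply', lapMatrix_toLinearMap₂', ← add_div, ← sum_add_distrib]
  simp_rw [← sum_add_distrib, hpt, ← mul_sum, sum_add_distrib, hsymm, hdeg]
  ring

theorem forall_adj_eq_neg_and_degree_eq_two_of_four_mul_le {x : V → ℝ}
    (hx : ∀ v, x v ≠ 0 → G.degree v ≤ 2) (hle : 4 * (x ⬝ᵥ x) ≤ x ⬝ᵥ (G.lapMatrix ℝ *ᵥ x)) :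
    (∀ i j, G.Adj i j → x j = -x i) ∧ ∀ v, x v ≠ 0 → G.degree v = 2 := by
  have hslack : ∀ i, 0 ≤ (4 - 2 * G.degree i) * x i ^ 2 := by
    intro i
    by_cases hi : x i = 0
    · simp [hi]
    · have : (G.degree i : ℝ) ≤ 2 := by exact_mod_cast hx i hi
      exact mul_nonneg (by linarith) (sq_nonneg _)
  have hsplit : 4 * (x ⬝ᵥ x) =
      2 * ∑ i, G.degree i * x i ^ 2 + ∑ i, (4 - 2 * G.degree i) * x i ^ 2 := by
    simp only [dotProduct, mul_sum, ← sum_add_distrib]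
    exact sum_congr rfl fun i _ => by ring
  have hid := G.dotProduct_lapMatrix_mulVec_add_sum_adj_sq_add x
  have hP : 0 ≤ ∑ i, ∑ j, if G.Adj i j then (x i + x j) ^ 2 else 0 := by positivity
  have hS : 0 ≤ ∑ i, (4 - 2 * G.degree i) * x i ^ 2 := sum_nonneg fun i _ => hslack i
  have hP0 : (∑ i, ∑ j, if G.Adj i j then (x i + x j) ^ 2 else 0) = 0 := by linarith
  have hS0 : ∑ i, (4 - 2 * G.degree i) * x i ^ 2 = 0 := by linarith
  constructor
  · simp (disch := intros; positivity) only [sum_eq_zero_iff_of_nonneg, mem_univ,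
      true_implies] at hP0
    intro i j hij
    have hij0 := hP0 i j
    rw [if_pos hij] at hij0
    linarith [pow_eq_zero_iff two_ne_zero |>.mp hij0]
  · intro v hv
    have hv0 := (sum_eq_zero_iff_of_nonneg fun i _ => hslack i).mp hS0 v (mem_univ v)
    rcases mul_eq_zero.mp hv0 with h2 | h2
    · exact_mod_cast (by linarith : (G.degree v : ℝ) = 2)
    · exact absurd (pow_eq_zero_iff two_ne_zero |>.mp h2) hv

theorem IsTree.dotProduct_lapMatrix_mulVec_lt (hT : G.IsTree) {x : V → ℝ} (hx0 : x ≠ 0)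
    (hx : ∀ v, x v ≠ 0 → G.degree v ≤ 2) :
    x ⬝ᵥ (G.lapMatrix ℝ *ᵥ x) < 4 * (x ⬝ᵥ x) := by
  by_contra! hle
  obtain ⟨hanti, hdeg⟩ := forall_adj_eq_neg_and_degree_eq_two_of_four_mul_le hx hle
  obtain ⟨v, hv⟩ := hT.exists_degree_ne_two
  have hxv : x v = 0 := by
    by_contra h
    exact hv (hdeg v h)
  apply hx0
  funext u
  simpa [hxv] using (hT.connected.preconnected u v).abs_eq_of_forall_adj_eq_neg hanti

end SimpleGraph

namespace Matrix.IsHermitian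
variable {n : Type*} [Fintype n] [DecidableEq n] {A : Matrix n n ℝ} (hA : A.IsHermitian)

noncomputable def spanEigenvectorsGE (c : ℝ) : Submodule ℝ (EuclideanSpace ℝ n) :=
  Submodule.span ℝ (Set.range fun i : {i // c ≤ hA.eigenvalues i} => hA.eigenvectorBasis i)

theorem finrank_spanEigenvectorsGE (c : ℝ) :
    Module.finrank ℝ (hA.spanEigenvectorsGE c) = #{i | c ≤ hA.eigenvalues i} := by
  rw [spanEigenvectorsGE, finrank_span_eq_card, Fintype.card_subtype]
  exact hA.eigenvectorBasis.orthonormal.linearIndependent.comp _ Subtype.val_injective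

theorem inner_eigenvectorBasis_mulVec (i : n) (x : EuclideanSpace ℝ n) :
    inner ℝ (hA.eigenvectorBasis i) (WithLp.toLp 2 (A *ᵥ x)) =
      hA.eigenvalues i * inner ℝ (hA.eigenvectorBasis i) x := by
  have hsymm : Aᵀ = A := (conjTranspose_eq_transpose_of_trivial A).symm.trans hA
  simp only [EuclideanSpace.inner_eq_star_dotProduct, star_trivial]
  rw [dotProduct_comm, dotProduct_mulVec, ← mulVec_transpose, hsymm, mulVec_eigenvectorBasis,
    smul_dotProduct, smul_eq_mul, dotProduct_comm]

theorem dotProduct_mulVec_eq_sum_eigenvalues_mul_sq (x : EuclideanSpace ℝ n) :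
    x ⬝ᵥ (A *ᵥ x) = ∑ i, hA.eigenvalues i * inner ℝ (hA.eigenvectorBasis i) x ^ 2 := by
  have hinner : x ⬝ᵥ (A *ᵥ x) = inner ℝ x (WithLp.toLp 2 (A *ᵥ x)) := by
    rw [EuclideanSpace.inner_eq_star_dotProduct, star_trivial, dotProduct_comm]
  rw [hinner, ← hA.eigenvectorBasis.sum_inner_mul_inner]
  refine sum_congr rfl fun i _ => ?_
  rw [inner_eigenvectorBasis_mulVec, real_inner_comm]
  ring

theorem inner_eigenvectorBasis_eq_zero_of_mem_spanEigenvectorsGE {c : ℝ} {x : EuclideanSpace ℝ n}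
    (hx : x ∈ hA.spanEigenvectorsGE c) {i : n} (hi : hA.eigenvalues i < c) :
    inner ℝ (hA.eigenvectorBasis i) x = 0 := by
  have hle : hA.spanEigenvectorsGE c ≤ LinearMap.ker (innerₛₗ ℝ (hA.eigenvectorBasis i)) := by
    refine Submodule.span_le.mpr (Set.range_subset_iff.mpr fun j => ?_)
    have hij : i ≠ j := fun h => (h ▸ hi).not_ge j.2
    exact hA.eigenvectorBasis.orthonormal.2 hij
  exact hle hx

theorem mul_dotProduct_self_le_of_mem_spanEigenvectorsGE {c : ℝ} {x : EuclideanSpace ℝ n}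
    (hx : x ∈ hA.spanEigenvectorsGE c) : c * (x ⬝ᵥ x) ≤ x ⬝ᵥ (A *ᵥ x) := by
  have hxx : x ⬝ᵥ x = ∑ i, inner ℝ (hA.eigenvectorBasis i) x ^ 2 := by
    rw [hA.eigenvectorBasis.sum_sq_inner_right, ← real_inner_self_eq_norm_sq]
    rfl
  rw [hA.dotProduct_mulVec_eq_sum_eigenvalues_mul_sq, hxx, mul_sum]
  refine sum_le_sum fun i _ => ?_
  rcases le_or_gt c (hA.eigenvalues i) with hi | hi
  · exact mul_le_mul_of_nonneg_right hi (sq_nonneg _)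
  · simp [hA.inner_eigenvectorBasis_eq_zero_of_mem_spanEigenvectorsGE hx hi]

end Matrix.IsHermitian

/-- for a finite tree with maximum degree `3`, the number of Laplacian
eigenvalues `≥ 4` is at most the number of vertices of degree exactly `3`. -/
theorem n4plus_le_nT {V : Type*} [Fintype V] [DecidableEq V]
    (G : SimpleGraph V) [DecidableRel G.Adj] (hT : G.IsTree)
    (hdeg : ∀ v : V, G.degree v ≤ 3) :
    n4plus G ≤ (Finset.univ.filter fun v : V => G.degree v = 3).card := by
  set hL := (G.posSemidef_lapMatrix ℝ).1
  let restrict : EuclideanSpace ℝ V →ₗ[ℝ] ({v // G.degree v = 3} → ℝ) :=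
    (LinearMap.funLeft ℝ ℝ Subtype.val).comp (WithLp.linearEquiv 2 ℝ (V → ℝ)).toLinearMap
  have hdisj : Disjoint (hL.spanEigenvectorsGE 4) (LinearMap.ker restrict) := by
    refine Submodule.disjoint_def.mpr fun x hxE hxT => ?_
    by_contra hx0
    have hx : ∀ v, x v ≠ 0 → G.degree v ≤ 2 := fun v hv => by
      have : G.degree v ≠ 3 := fun h3 => hv (congrFun hxT ⟨v, h3⟩)
      have := hdeg v
      omega
    exact (hT.dotProduct_lapMatrix_mulVec_lt (x := x.ofLp) (by simpa using hx0) hx).not_ge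
      (hL.mul_dotProduct_self_le_of_mem_spanEigenvectorsGE hxE)
  have hle := LinearMap.finrank_le_finrank_of_injective
    (LinearMap.injective_domRestrict_iff.mpr hdisj)
  rw [hL.finrank_spanEigenvectorsGE, Module.finrank_fintype_fun_eq_card,
    Fintype.card_subtype] at hle
  -- `n4plus` decides `4 ≤ λ` with the classical instance
  convert hle using 2
  unfold n4plus
  congr!
end

section
/- In the base case of trunk length m ≥ 2 with exactly 2 T-junctions: if a uniform tree H with 2 T-junctions and trunk length m ≥ 2 is split by removing a trunk edge not incident to either T-junction into two starlike trees S_1 and S_2, then λ_1(H) ≥ λ_2(H) ≥ 4, i.e., H has at least two Laplacian eigenvalues ≥ 4. -/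
open Finset Matrix

namespace Matrix.IsHermitian

variable {n : Type*} [Fintype n] [DecidableEq n] {A : Matrix n n ℝ} (hA : A.IsHermitian)

theorem dotProduct_eq_sum_eigenvectorBasis (x y : n → ℝ) :
    x ⬝ᵥ y = ∑ i, (⇑(hA.eigenvectorBasis i) ⬝ᵥ x) * (⇑(hA.eigenvectorBasis i) ⬝ᵥ y) := by
  have := hA.eigenvectorBasis.sum_inner_mul_inner (WithLp.toLp 2 x) (WithLp.toLp 2 y)
  simp only [EuclideanSpace.inner_eq_star_dotProduct, star_trivial] at this
  rw [dotProduct_comm, ← this]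
  exact sum_congr rfl fun i _ => by rw [dotProduct_comm y]

theorem eigenvectorBasis_dotProduct_mulVec (i : n) (x : n → ℝ) :
    ⇑(hA.eigenvectorBasis i) ⬝ᵥ (A *ᵥ x) = hA.eigenvalues i * (⇑(hA.eigenvectorBasis i) ⬝ᵥ x) := by
  rw [dotProduct_mulVec, ← mulVec_transpose, ← conjTranspose_eq_transpose_of_trivial, hA.eq,
    hA.mulVec_eigenvectorBasis, smul_dotProduct, smul_eq_mul]

theorem dotProduct_mulVec_eq_sum (x : n → ℝ) :
    x ⬝ᵥ (A *ᵥ x) = ∑ i, hA.eigenvalues i * (⇑(hA.eigenvectorBasis i) ⬝ᵥ x) ^ 2 := by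
  rw [hA.dotProduct_eq_sum_eigenvectorBasis]
  refine sum_congr rfl fun i _ => ?_
  rw [eigenvectorBasis_dotProduct_mulVec]
  ring

theorem finrank_le_card_le_eigenvalues {c : ℝ} (W : Submodule ℝ (n → ℝ))
    (hW : ∀ z ∈ W, c * (z ⬝ᵥ z) ≤ z ⬝ᵥ (A *ᵥ z)) :
    Module.finrank ℝ W ≤ #{i | c ≤ hA.eigenvalues i} := by
  set S : Finset n := {i | c ≤ hA.eigenvalues i}
  by_contra! hlt
  let coeffs : W →ₗ[ℝ] S → ℝ :=
    (Matrix.of fun (i : S) j => hA.eigenvectorBasis i j).mulVecLin ∘ₗ W.subtype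
  have hker : LinearMap.ker coeffs ≠ ⊥ :=
    LinearMap.ker_ne_bot_of_finrank_lt (by simpa using hlt)
  obtain ⟨⟨z, hzW⟩, hz, hz0⟩ := Submodule.exists_mem_ne_zero_of_ne_bot hker
  have hzS : ∀ i ∈ S, ⇑(hA.eigenvectorBasis i) ⬝ᵥ z = 0 := fun i hi => congrFun hz ⟨i, hi⟩
  have hz0 : z ≠ 0 := by simpa using hz0
  obtain ⟨i₀, hi₀⟩ : ∃ i, ⇑(hA.eigenvectorBasis i) ⬝ᵥ z ≠ 0 := by
    by_contra! h
    exact hz0 (dotProduct_self_eq_zero.mp (by simp [hA.dotProduct_eq_sum_eigenvectorBasis z z, h]))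
  have : z ⬝ᵥ (A *ᵥ z) < c * (z ⬝ᵥ z) := by
    rw [hA.dotProduct_mulVec_eq_sum, hA.dotProduct_eq_sum_eigenvectorBasis z z, mul_sum]
    refine sum_lt_sum (fun i _ => ?_) ⟨i₀, mem_univ _, ?_⟩
    · by_cases hi : i ∈ S
      · simp [hzS i hi]
      · have : hA.eigenvalues i < c := by simpa [S] using hi
        nlinarith [sq_nonneg (⇑(hA.eigenvectorBasis i) ⬝ᵥ z)]
    · have hi₀S : i₀ ∉ S := fun h => hi₀ (hzS i₀ h)
      have : hA.eigenvalues i₀ < c := by simpa [S] using hi₀S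
      have : 0 < (⇑(hA.eigenvectorBasis i₀) ⬝ᵥ z) ^ 2 := by positivity
      nlinarith
  exact (hW z hzW).not_gt this

end Matrix.IsHermitian

namespace List

variable {α : Type*} [LinearOrder α] {l : List α} (hl : l.Pairwise (· ≤ ·)) (d : α)
include hl

theorem Pairwise.getD_le_getD {i j : ℕ} (hij : i ≤ j) (hj : j < l.length) :
    l.getD i d ≤ l.getD j d := by
  rw [getD_eq_getElem _ _ (hij.trans_lt hj), getD_eq_getElem _ _ hj]
  exact hl.rel_get_of_le (a := ⟨i, hij.trans_lt hj⟩) (b := ⟨j, hj⟩) hij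

theorem Pairwise.le_getD_length_sub {c : α} {j : ℕ} (hj : 1 ≤ j)
    (hcount : j ≤ l.countP fun a => c ≤ a) : c ≤ l.getD (l.length - j) d := by
  have hjl : j ≤ l.length := hcount.trans countP_le_length
  by_contra! hlt
  have hhead : (l.take (l.length - j + 1)).countP (fun a => c ≤ a) = 0 := by
    refine countP_eq_zero.mpr fun a ha => ?_
    obtain ⟨i, hi, rfl⟩ := mem_iff_getElem.mp ha
    rw [length_take] at hi
    have hle := hl.getD_le_getD d (i := i) (j := l.length - j) (by omega) (by omega)
    rw [getD_eq_getElem _ _ (by omega)] at hle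
    simpa [getElem_take] using hle.trans_lt hlt
  have htail : (l.drop (l.length - j + 1)).countP (fun a => c ≤ a) ≤ j - 1 :=
    countP_le_length.trans (by simp; omega)
  rw [← take_append_drop (l.length - j + 1) l, countP_append] at hcount
  omega

end List

section eigDesc

variable {V : Type*} [Fintype V] [DecidableEq V] (G : SimpleGraph V)

theorem eigDesc_le_eigDesc {j k : ℕ} (hj : 1 ≤ j) (hjk : j ≤ k) : eigDesc G k ≤ eigDesc G j := by
  suffices ∀ s : Multiset ℝ, Multiset.card s = Fintype.card V →
      (s.sort (· ≤ ·)).getD (Fintype.card V - k) 0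
        ≤ (s.sort (· ≤ ·)).getD (Fintype.card V - j) 0 from
    this _ (by simp)
  intro s hs
  obtain hV | hV := Nat.eq_zero_or_pos (Fintype.card V)
  · simp [hV]
  · exact (Multiset.pairwise_sort _ _).getD_le_getD 0 (by omega) (by simp; omega)

theorem le_eigDesc_of_le_card_filter [DecidableRel G.Adj] {c : ℝ} {j : ℕ} (hj : 1 ≤ j)
    (hcount : j ≤ #{i | c ≤ (G.posSemidef_lapMatrix ℝ).1.eigenvalues i}) : c ≤ eigDesc G j := by
  suffices ∀ s : Multiset ℝ, Multiset.card s = Fintype.card V → j ≤ s.countP (c ≤ ·) →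
      c ≤ (s.sort (· ≤ ·)).getD (Fintype.card V - j) 0 from
    this _ (by simp) (by
      rw [Multiset.countP_map]
      -- the two sides differ only in the `DecidableRel G.Adj` instance inside `lapMatrix`
      convert hcount using 4
      rw [card_def, filter_val]
      congr!)
  intro s hs hsj
  rw [← hs, ← Multiset.length_sort (· ≤ ·)]
  refine (Multiset.pairwise_sort _ _).le_getD_length_sub 0 hj ?_
  rwa [← Multiset.coe_countP, Multiset.sort_eq]

end eigDesc

namespace SimpleGraph

variable {V : Type*} [Fintype V] [DecidableEq V] {G : SimpleGraph V} [DecidableRel G.Adj]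

theorem IsIndepSet.sum_sum_sq_sub_le_dotProduct_lapMatrix_mulVec {S : Finset V}
    (hS : G.IsIndepSet S) (z : V → ℝ) :
    ∑ c ∈ S, ∑ w ∈ G.neighborFinset c, (z c - z w) ^ 2 ≤ z ⬝ᵥ (G.lapMatrix ℝ *ᵥ z) := by
  set F : V → V → ℝ := fun t s => if G.Adj t s then (z t - z s) ^ 2 else 0
  have hF_symm : ∀ t s, F t s = F s t := fun t s => by
    simp only [F, G.adj_comm t s]; split <;> ring
  have hF_nonneg : ∀ t s, 0 ≤ F t s := fun t s => by simp only [F]; split <;> positivity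
  have hrow : ∀ c, ∑ s, F c s = ∑ w ∈ G.neighborFinset c, (z c - z w) ^ 2 := fun c => by
    rw [neighborFinset_eq_filter, sum_filter]
  -- An edge meets `S` in at most one endpoint, so each term `F t s` is counted at most once.
  have hpoint : ∀ t s, (if t ∈ S then F t s else 0) + (if s ∈ S then F t s else 0) ≤ F t s := by
    intro t s
    by_cases ht : t ∈ S <;> by_cases hs : s ∈ S <;> simp only [ht, hs, if_true, if_false]
    · have hnadj : ¬ G.Adj t s := fun hadj => hS ht hs hadj.ne hadj
      simp [F, hnadj]
    all_goals linarith [hF_nonneg t s]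
  have hform : z ⬝ᵥ (G.lapMatrix ℝ *ᵥ z) = (∑ t, ∑ s, F t s) / 2 := by
    rw [← toLinearMap₂'_apply', lapMatrix_toLinearMap₂']
  calc ∑ c ∈ S, ∑ w ∈ G.neighborFinset c, (z c - z w) ^ 2
      = (∑ t, ∑ s, ((if t ∈ S then F t s else 0) + (if s ∈ S then F t s else 0))) / 2 := by
        have hswap : ∑ t, ∑ s, (if s ∈ S then F t s else 0)
            = ∑ t, ∑ s, (if t ∈ S then F t s else 0) := by
          rw [sum_comm]
          exact sum_congr rfl fun t _ => sum_congr rfl fun s _ => by rw [hF_symm]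
        have hrows : ∑ t, ∑ s, (if t ∈ S then F t s else 0) = ∑ c ∈ S, ∑ s, F c s := by
          simp [sum_ite_mem]
        simp only [sum_add_distrib, hswap, hrows, hrow]
        ring
    _ ≤ (∑ t, ∑ s, F t s) / 2 := by
        gcongr with t _ s _
        exact hpoint t s
    _ = _ := hform.symm

variable (G) in
def starVec (c : V) : V → ℝ := fun t => if t = c then G.degree c else if G.Adj c t then -1 else 0

theorem starVec_self (c : V) : G.starVec c c = G.degree c := by simp [starVec]

theorem starVec_of_adj {c t : V} (h : G.Adj c t) : G.starVec c t = -1 := by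
  simp [starVec, h, h.ne']

theorem starVec_of_not_adj {c t : V} (hne : t ≠ c) (h : ¬ G.Adj c t) : G.starVec c t = 0 := by
  simp [starVec, hne, h]

theorem starVec_dotProduct_self (c : V) :
    G.starVec c ⬝ᵥ G.starVec c = (G.degree c : ℝ) ^ 2 + G.degree c := by
  have hterm : ∀ t, G.starVec c t * G.starVec c t
      = (if t = c then (G.degree c : ℝ) ^ 2 else 0) + (if G.Adj c t then 1 else 0) := by
    intro t
    by_cases htc : t = c
    · subst htc; simp [starVec_self, sq]
    · by_cases hadj : G.Adj c t
      · simp [starVec_of_adj hadj, htc, hadj]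
      · simp [starVec_of_not_adj htc hadj, htc, hadj]
  rw [dotProduct, sum_congr rfl fun t _ => hterm t, sum_add_distrib, sum_ite_eq', sum_boole,
    ← neighborFinset_eq_filter, card_neighborFinset_eq_degree]
  simp

theorem starVec_eq_zero_of_three_le_dist {c c' t : V} (h : 3 ≤ G.dist c c')
    (ht : t = c ∨ G.Adj c t) : G.starVec c' t = 0 := by
  have hne : c ≠ c' := by rintro rfl; simp at h
  have hnadj : ¬ G.Adj c c' := fun hadj => by
    have := G.dist_le (Walk.cons hadj Walk.nil); simp at this; omega
  rcases ht with rfl | hadj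
  · exact starVec_of_not_adj hne (fun h' => hnadj h'.symm)
  · refine starVec_of_not_adj (by rintro rfl; exact hnadj hadj) fun hadj' => ?_
    have := G.dist_le (Walk.cons hadj (Walk.cons hadj'.symm Walk.nil)); simp at this; omega

section Centers

variable {ι : Type*} [Fintype ι] {c : ι → V} (hc : Pairwise fun i j => 3 ≤ G.dist (c i) (c j))
  (a : ι → ℝ)
include hc

theorem sum_smul_starVec_apply_of_closedNbhd {i : ι} {t : V} (ht : t = c i ∨ G.Adj (c i) t) :
    (∑ j, a j • G.starVec (c j)) t = a i * G.starVec (c i) t := by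
  rw [Finset.sum_apply, sum_eq_single i (fun j _ hji => ?_) (by simp)]
  · rfl
  · simp [starVec_eq_zero_of_three_le_dist (hc hji.symm) ht]

theorem starVec_dotProduct_sum_smul_starVec (i : ι) :
    G.starVec (c i) ⬝ᵥ ∑ j, a j • G.starVec (c j)
      = a i * (G.starVec (c i) ⬝ᵥ G.starVec (c i)) := by
  rw [dotProduct, dotProduct, mul_sum]
  refine sum_congr rfl fun t _ => ?_
  by_cases ht : t = c i ∨ G.Adj (c i) t
  · rw [sum_smul_starVec_apply_of_closedNbhd hc a ht]; ring
  · rw [not_or] at ht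
    simp [starVec_of_not_adj ht.1 ht.2]

theorem sum_smul_starVec_dotProduct_self :
    (∑ j, a j • G.starVec (c j)) ⬝ᵥ ∑ j, a j • G.starVec (c j)
      = ∑ i, a i ^ 2 * ((G.degree (c i) : ℝ) ^ 2 + G.degree (c i)) := by
  rw [sum_dotProduct]
  refine sum_congr rfl fun i _ => ?_
  rw [smul_dotProduct, starVec_dotProduct_sum_smul_starVec hc, starVec_dotProduct_self, smul_eq_mul]
  ring

theorem sum_degree_mul_sq_le_dotProduct_lapMatrix_mulVec :
    ∑ i, (G.degree (c i) : ℝ) * (a i * (G.degree (c i) + 1)) ^ 2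
      ≤ (∑ j, a j • G.starVec (c j)) ⬝ᵥ (G.lapMatrix ℝ *ᵥ ∑ j, a j • G.starVec (c j)) := by
  have hinj : Function.Injective c := fun i j hij => by
    by_contra hne; have := hc hne; simp [hij] at this
  have hindep : G.IsIndepSet (univ.image c : Finset V) := by
    intro x hx y hy hxy hadj
    simp only [coe_image, coe_univ, Set.image_univ, Set.mem_range] at hx hy
    obtain ⟨i, rfl⟩ := hx
    obtain ⟨j, rfl⟩ := hy
    have : 3 ≤ G.dist (c i) (c j) := hc fun hij => hxy (congrArg c hij)
    rw [dist_eq_one_iff_adj.mpr hadj] at this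
    omega
  refine le_trans (le_of_eq ?_) (hindep.sum_sum_sq_sub_le_dotProduct_lapMatrix_mulVec _)
  rw [sum_image fun i _ j _ hij => hinj hij]
  refine sum_congr rfl fun i _ => ?_
  have hcenter : (∑ j, a j • G.starVec (c j)) (c i) = a i * G.degree (c i) := by
    rw [sum_smul_starVec_apply_of_closedNbhd hc a (Or.inl rfl), starVec_self]
  have hleaf : ∀ w ∈ G.neighborFinset (c i),
      ((∑ j, a j • G.starVec (c j)) (c i) - (∑ j, a j • G.starVec (c j)) w) ^ 2
        = (a i * (G.degree (c i) + 1)) ^ 2 := by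
    intro w hw
    rw [mem_neighborFinset] at hw
    rw [hcenter, sum_smul_starVec_apply_of_closedNbhd hc a (Or.inr hw), starVec_of_adj hw]
    ring
  rw [sum_congr rfl hleaf, sum_const, card_neighborFinset_eq_degree, nsmul_eq_mul]

theorem card_le_card_le_lapMatrix_eigenvalues {d : ℕ} (hd : 0 < d)
    (hdeg : ∀ i, d ≤ G.degree (c i)) :
    Fintype.card ι ≤ #{k | (d + 1 : ℝ) ≤ (G.posSemidef_lapMatrix ℝ).1.eigenvalues k} := by
  let φ := Fintype.linearCombination ℝ fun i => G.starVec (c i)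
  have hφ : ∀ a, φ a = ∑ j, a j • G.starVec (c j) := Fintype.linearCombination_apply ℝ _
  have hinj : Function.Injective φ := by
    rw [← LinearMap.ker_eq_bot, LinearMap.ker_eq_bot']
    intro a ha
    funext i
    have hi := congrFun ha (c i)
    rw [hφ, sum_smul_starVec_apply_of_closedNbhd hc a (Or.inl rfl), starVec_self] at hi
    have : (G.degree (c i) : ℝ) ≠ 0 := Nat.cast_ne_zero.mpr (by have := hdeg i; omega)
    simpa [this] using hi
  calc Fintype.card ι = Module.finrank ℝ (LinearMap.range φ) := by
        rw [LinearMap.finrank_range_of_inj hinj, Module.finrank_fintype_fun_eq_card]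
    _ ≤ _ := (G.posSemidef_lapMatrix ℝ).1.finrank_le_card_le_eigenvalues _ ?_
  rintro _ ⟨a, rfl⟩
  rw [hφ, sum_smul_starVec_dotProduct_self hc, mul_sum]
  refine le_trans (sum_le_sum fun i _ => ?_) (sum_degree_mul_sq_le_dotProduct_lapMatrix_mulVec hc a)
  have hD : (d : ℝ) ≤ G.degree (c i) := by exact_mod_cast hdeg i
  calc (d + 1 : ℝ) * (a i ^ 2 * ((G.degree (c i) : ℝ) ^ 2 + G.degree (c i)))
      = (a i ^ 2 * G.degree (c i) * (G.degree (c i) + 1)) * (d + 1) := by ring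
    _ ≤ (a i ^ 2 * G.degree (c i) * (G.degree (c i) + 1)) * (G.degree (c i) + 1) := by gcongr
    _ = G.degree (c i) * (a i * (G.degree (c i) + 1)) ^ 2 := by ring

end Centers

end SimpleGraph

theorem base_case_two_junctions_general {V : Type*} [Fintype V] [DecidableEq V]
    (G : SimpleGraph V) [DecidableRel G.Adj]
    (u v : V) (hu : G.degree u = 3) (hv : G.degree v = 3)
    (hdist : 3 ≤ G.dist u v) :
    eigDesc G 1 ≥ eigDesc G 2 ∧ eigDesc G 2 ≥ 4 := by
  have hc : Pairwise fun i j => 3 ≤ G.dist (![u, v] i) (![u, v] j) := by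
    intro i j hij
    fin_cases i <;> fin_cases j <;> simp_all [SimpleGraph.dist_comm]
  have hcard := SimpleGraph.card_le_card_le_lapMatrix_eigenvalues hc (d := 3) (by norm_num)
    (fun i => by fin_cases i; exacts [hu.ge, hv.ge])
  norm_num at hcard
  exact ⟨eigDesc_le_eigDesc G le_rfl (by norm_num),
    le_eigDesc_of_le_card_filter G (by norm_num) hcard⟩

/-- base case `m ≥ 2`, two T-junctions: a tree of maximum degree 3 with
exactly two degree-3 vertices whose connecting path has at least 2 intermediate vertices
(distance `≥ 3`) has at least two Laplacian eigenvalues `≥ 4`: `λ₁ ≥ λ₂ ≥ 4`. -/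
theorem base_case_two_junctions {V : Type*} [Fintype V] [DecidableEq V]
    (G : SimpleGraph V) [DecidableRel G.Adj] (hT : G.IsTree)
    (hdeg : ∀ v : V, G.degree v ≤ 3)
    (u v : V) (huv : u ≠ v) (hu : G.degree u = 3) (hv : G.degree v = 3)
    (honly : ∀ w : V, G.degree w = 3 → w = u ∨ w = v)
    (hdist : 3 ≤ G.dist u v) :
    eigDesc G 1 ≥ eigDesc G 2 ∧ eigDesc G 2 ≥ 4 :=
  base_case_two_junctions_general G u v hu hv hdist
end
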